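/- Let k be an ordered field in which every non-negative element is a square (a square-ordered field). Then: (i) the quotient group k*/(k*)² has order 2, and every quadratic field extension of k is isomorphic to ℓ = k(√−1); (ii) the norm map ℓ* → k*, x ↦ x·σ(x), is not surjective, and −1 is not of the form x·σ(x) for any x ∈ ℓ; (iii) a triple c = (c₁, c₂, c₃) ∈ k³ is ℓ-admissible if and only if c₁ > 1/2 and c₃ < c₂ < −c₃. -/

import Mathlib

open Module Function

variable {k : Type}

/-- The function `q_c : ℓ × ℓ → ℓ` associated with a triple `c = (c₁, c₂, c₃) ∈ k³`. -/
def qc [Field k] {ℓ : Type} [Field ℓ] [Algebra k ℓ] (σ : ℓ ≃ₐ[k] ℓ) (c : k × k × k)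
    (x y : ℓ) : ℓ :=
  (1 - algebraMap k ℓ c.1) * x ^ 2 + algebraMap k ℓ c.1 * (x * σ x)
    - algebraMap k ℓ c.2.1 * y ^ 2 - algebraMap k ℓ c.2.2 * (y * σ y)

/-- A triple `c ∈ k³` is `ℓ`-admissible if `q_c` is anisotropic. -/
def IsAdmissibleTriple [Field k] {ℓ : Type} [Field ℓ] [Algebra k ℓ] (σ : ℓ ≃ₐ[k] ℓ)
    (c : k × k × k) : Prop :=
  ∀ x y : ℓ, qc σ c x y = 0 → x = 0 ∧ y = 0

/-!
Since every positive element of `k` is a square and no negative one is, `k*/(k*)²` is `{±1}`.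
Completing the square writes any quadratic extension as `k(√w)` with `w` not a square, hence
`w < 0`, so it contains `√-1` and is `k[X]/(X² + 1)`. In the basis `1, i` of `ℓ` the norm is
`a² + b²`, which never equals `-1`. The real part of `q_c(a + bi, u + vi)` is the diagonal form
`a² + (2c₁ - 1)b² - (c₂ + c₃)u² + (c₂ - c₃)v²`, positive definite exactly under the stated
inequalities; when one of them fails, a square root of the offending ratio gives an isotropic
vector.
-/

section QuadraticExtension

variable [Field k] {L : Type*} [Field L] [Algebra k L]

lemma eq_zero_of_algebraMap_add_algebraMap_mul_eq_zero {α : L}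
    (hα : α ∉ Set.range (algebraMap k L)) {a b : k}
    (h : algebraMap k L a + algebraMap k L b * α = 0) : a = 0 ∧ b = 0 := by
  obtain rfl : b = 0 := by
    by_contra hb
    refine hα ⟨-a / b, ?_⟩
    rw [map_div₀, map_neg, div_eq_iff (by simpa using hb)]
    linear_combination -h
  simpa using h

lemma exists_algebraMap_add_algebraMap_mul_eq (h2 : finrank k L = 2) {α : L}
    (hα : α ∉ Set.range (algebraMap k L)) (z : L) :
    ∃ a b : k, algebraMap k L a + algebraMap k L b * α = z := by
  have hind : LinearIndependent k ![(1 : L), α] := by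
    refine LinearIndependent.pair_iff.2 fun s t hst => ?_
    rw [Algebra.smul_def, Algebra.smul_def, mul_one] at hst
    exact eq_zero_of_algebraMap_add_algebraMap_mul_eq_zero hα hst
  have hspan : Submodule.span k (Set.range ![(1 : L), α]) = ⊤ :=
    hind.span_eq_top_of_card_eq_finrank (by rw [h2, Fintype.card_fin])
  have hz : z ∈ Submodule.span k {(1 : L), α} := by
    rw [← Matrix.range_cons_cons_empty, hspan]; trivial
  obtain ⟨a, b, hab⟩ := Submodule.mem_span_pair.1 hz
  exact ⟨a, b, by rwa [Algebra.smul_def, Algebra.smul_def, mul_one] at hab⟩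

lemma exists_notMem_range_algebraMap (h2 : finrank k L = 2) :
    ∃ α : L, α ∉ Set.range (algebraMap k L) := by
  by_contra! h
  have := finrank_of_bijective_algebraMap ⟨(algebraMap k L).injective, fun z => h z⟩
  omega

/-- Completing the square. -/
lemma exists_sq_eq_algebraMap (h2k : (2 : k) ≠ 0) (h2 : finrank k L = 2) :
    ∃ β : L, β ∉ Set.range (algebraMap k L) ∧ ∃ w : k, β ^ 2 = algebraMap k L w := by
  obtain ⟨α, hα⟩ := exists_notMem_range_algebraMap h2
  obtain ⟨a, b, hab⟩ := exists_algebraMap_add_algebraMap_mul_eq h2 hα (α ^ 2)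
  refine ⟨2 * α - algebraMap k L b, fun ⟨r, hr⟩ => hα ⟨(r + b) / 2, ?_⟩, 4 * a + b ^ 2, ?_⟩
  · rw [map_div₀, div_eq_iff (by simpa using h2k)]
    simp only [map_add, map_ofNat]
    linear_combination hr
  · simp only [map_add, map_mul, map_pow, map_ofNat]
    linear_combination -4 * hab

lemma AlgEquiv.apply_eq_neg_of_sq_eq_algebraMap (σ : L ≃ₐ[k] L) (hσ : ∃ x : L, σ x ≠ x)
    (h2 : finrank k L = 2) {α : L} (hα : α ∉ Set.range (algebraMap k L)) {w : k}
    (hw : α ^ 2 = algebraMap k L w) : σ α = -α := by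
  have hsq : (σ α - α) * (σ α + α) = 0 := by
    linear_combination (map_pow σ α 2).symm.trans ((congrArg σ hw).trans (σ.commutes w)) - hw
  refine eq_neg_of_add_eq_zero_left ((mul_eq_zero.1 hsq).resolve_left fun hfix => ?_)
  obtain ⟨x, hx⟩ := hσ
  obtain ⟨a, b, rfl⟩ := exists_algebraMap_add_algebraMap_mul_eq h2 hα x
  rw [sub_eq_zero] at hfix
  simp [σ.commutes, hfix] at hx

open Polynomial in
lemma nonempty_adjoinRoot_algEquiv (hneg : ∀ b : k, b ^ 2 ≠ -1) (h2 : finrank k L = 2)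
    {γ : L} (hγ : γ ^ 2 = -1) : Nonempty (AdjoinRoot (X ^ 2 - C (-1 : k)) ≃ₐ[k] L) := by
  have hirr := X_pow_sub_C_irreducible_of_prime Nat.prime_two hneg
  have := Fact.mk hirr
  have hfr : finrank k (AdjoinRoot (X ^ 2 - C (-1 : k))) = 2 := by
    rw [(AdjoinRoot.powerBasis hirr.ne_zero).finrank, AdjoinRoot.powerBasis_dim,
      natDegree_X_pow_sub_C]
  have : FiniteDimensional k L := .of_finrank_eq_succ h2
  let f := AdjoinRoot.liftAlgHom (X ^ 2 - C (-1 : k)) (Algebra.ofId k L) γ (by simp [hγ])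
  exact ⟨AlgEquiv.ofLinearEquiv (LinearEquiv.ofInjectiveOfFinrankEq f.toLinearMap f.injective
    (hfr.trans h2.symm)) (map_one f) (map_mul f)⟩

end QuadraticExtension

section SquareOrdered

variable [Field k] [LinearOrder k] [IsStrictOrderedRing k]

lemma sq_ne_neg_one (b : k) : b ^ 2 ≠ -1 :=
  (neg_one_lt_zero.trans_le (sq_nonneg b)).ne'

lemma exists_sq_eq_neg_one_of_finrank_eq_two (hsq : ∀ x : k, 0 ≤ x → IsSquare x)
    {L : Type*} [Field L] [Algebra k L] (h2 : finrank k L = 2) : ∃ γ : L, γ ^ 2 = -1 := by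
  obtain ⟨β, hβ, w, hw⟩ := exists_sq_eq_algebraMap two_ne_zero h2
  obtain hw0 | hw0 := lt_or_ge w 0
  · obtain ⟨t, ht⟩ := hsq (-w) (by linarith)
    have ht0 : t ≠ 0 := by
      rintro rfl
      linarith [mul_zero (0 : k)]
    have htL := congrArg (algebraMap k L) ht
    rw [map_neg, map_mul] at htL
    refine ⟨β / algebraMap k L t, ?_⟩
    rw [div_pow, hw, div_eq_iff (pow_ne_zero 2 ((map_ne_zero _).2 ht0))]
    linear_combination -htL
  · obtain ⟨s, rfl⟩ := hsq w hw0
    have hfactor : (β - algebraMap k L s) * (β + algebraMap k L s) = 0 := by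
      rw [map_mul] at hw
      linear_combination hw
    rcases mul_eq_zero.1 hfactor with h | h
    · exact absurd ⟨s, (sub_eq_zero.1 h).symm⟩ hβ
    · exact absurd ⟨-s, by rw [map_neg, eq_neg_of_add_eq_zero_left h]⟩ hβ

lemma notMem_range_algebraMap_of_sq_eq_neg_one {L : Type*} [Field L] [Algebra k L] {i : L}
    (hi : i ^ 2 = -1) : i ∉ Set.range (algebraMap k L) := by
  rintro ⟨b, rfl⟩
  exact sq_ne_neg_one b ((algebraMap k L).injective (by simpa using hi))

lemma mem_range_powMonoidHom_two_iff (hsq : ∀ x : k, 0 ≤ x → IsSquare x) (b : kˣ) :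
    b ∈ (powMonoidHom 2 : kˣ →* kˣ).range ↔ 0 < (b : k) := by
  constructor
  · rintro ⟨u, rfl⟩
    simpa using sq_pos_of_ne_zero u.ne_zero
  · intro hb
    obtain ⟨s, hs⟩ := hsq b hb.le
    have hs0 : s ≠ 0 := by rintro rfl; simp at hs
    exact ⟨Units.mk0 s hs0, Units.ext (by simp [hs, sq])⟩

lemma index_range_powMonoidHom_two (hsq : ∀ x : k, 0 ≤ x → IsSquare x) :
    (powMonoidHom 2 : kˣ →* kˣ).range.index = 2 := by
  refine Subgroup.index_eq_two_iff.2 ⟨-1, fun b => ?_⟩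
  simp only [mem_range_powMonoidHom_two_iff hsq, Units.val_neg, mul_neg_one, Left.neg_pos_iff]
  rcases b.ne_zero.lt_or_gt with hb | hb
  · exact Or.inl ⟨hb, hb.not_gt⟩
  · exact Or.inr ⟨hb, hb.not_gt⟩

end SquareOrdered

section Coordinates

variable [Field k]

def qcRe (c : k × k × k) (a b u v : k) : k :=
  (1 - c.1) * (a ^ 2 - b ^ 2) + c.1 * (a ^ 2 + b ^ 2) - c.2.1 * (u ^ 2 - v ^ 2)
    - c.2.2 * (u ^ 2 + v ^ 2)

def qcIm (c : k × k × k) (a b u v : k) : k :=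
  2 * (1 - c.1) * a * b - 2 * c.2.1 * u * v

variable {ℓ : Type} [Field ℓ] [Algebra k ℓ] {i : ℓ} {σ : ℓ ≃ₐ[k] ℓ}

lemma AlgEquiv.apply_algebraMap_add_algebraMap_mul (hσi : σ i = -i) (a b : k) :
    σ (algebraMap k ℓ a + algebraMap k ℓ b * i) = algebraMap k ℓ a - algebraMap k ℓ b * i := by
  rw [map_add, map_mul, σ.commutes, σ.commutes, hσi, mul_neg, ← sub_eq_add_neg]

lemma mul_apply_algebraMap_add_algebraMap_mul (hi : i ^ 2 = -1) (hσi : σ i = -i) (a b : k) :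
    (algebraMap k ℓ a + algebraMap k ℓ b * i) * σ (algebraMap k ℓ a + algebraMap k ℓ b * i)
      = algebraMap k ℓ (a ^ 2 + b ^ 2) := by
  rw [σ.apply_algebraMap_add_algebraMap_mul hσi, map_add, map_pow, map_pow]
  linear_combination -(algebraMap k ℓ b) ^ 2 * hi

lemma qc_algebraMap_add_algebraMap_mul (hi : i ^ 2 = -1) (hσi : σ i = -i)
    (c : k × k × k) (a b u v : k) :
    qc σ c (algebraMap k ℓ a + algebraMap k ℓ b * i) (algebraMap k ℓ u + algebraMap k ℓ v * i)
      = algebraMap k ℓ (qcRe c a b u v) + algebraMap k ℓ (qcIm c a b u v) * i := by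
  simp only [qc, qcRe, qcIm, σ.apply_algebraMap_add_algebraMap_mul hσi, map_add, map_sub,
    map_mul, map_pow, map_one, map_ofNat]
  linear_combination ((1 - 2 * algebraMap k ℓ c.1) * (algebraMap k ℓ b) ^ 2
    + (algebraMap k ℓ c.2.2 - algebraMap k ℓ c.2.1) * (algebraMap k ℓ v) ^ 2) * hi

end Coordinates

section Admissible

variable [Field k] [LinearOrder k] [IsStrictOrderedRing k]

lemma eq_zero_of_qcRe_eq_zero {c : k × k × k} (h1 : 1 / 2 < c.1) (h2 : c.2.2 < c.2.1)
    (h3 : c.2.1 < -c.2.2) {a b u v : k} (h : qcRe c a b u v = 0) :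
    a = 0 ∧ b = 0 ∧ u = 0 ∧ v = 0 := by
  have hsum : a ^ 2 + (2 * c.1 - 1) * b ^ 2 + (-c.2.2 - c.2.1) * u ^ 2
      + (c.2.1 - c.2.2) * v ^ 2 = 0 := by
    rw [qcRe] at h
    linear_combination h
  have p1 : 0 < 2 * c.1 - 1 := by linarith
  have p2 : 0 < -c.2.2 - c.2.1 := by linarith
  have p3 : 0 < c.2.1 - c.2.2 := by linarith
  have ha : a ^ 2 = 0 := by nlinarith [sq_nonneg a, sq_nonneg b, sq_nonneg u, sq_nonneg v]
  have hb : b ^ 2 = 0 := by nlinarith [sq_nonneg a, sq_nonneg b, sq_nonneg u, sq_nonneg v]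
  have hu : u ^ 2 = 0 := by nlinarith [sq_nonneg a, sq_nonneg b, sq_nonneg u, sq_nonneg v]
  have hv : v ^ 2 = 0 := by nlinarith [sq_nonneg a, sq_nonneg b, sq_nonneg u, sq_nonneg v]
  simp_all

lemma exists_qcRe_eq_zero_qcIm_eq_zero (hsq : ∀ x : k, 0 ≤ x → IsSquare x) {c : k × k × k}
    (h : ¬ (1 / 2 < c.1 ∧ c.2.2 < c.2.1 ∧ c.2.1 < -c.2.2)) :
    ∃ a b u v : k, qcRe c a b u v = 0 ∧ qcIm c a b u v = 0 ∧ ¬ (a = 0 ∧ b = 0 ∧ u = 0 ∧ v = 0) := by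
  rcases le_or_gt 0 (c.2.1 + c.2.2) with h23 | h23
  · obtain ⟨s, hs⟩ := hsq _ h23
    exact ⟨s, 0, 1, 0, by rw [qcRe]; linear_combination -hs, by simp [qcIm], by simp⟩
  rcases le_or_gt c.2.1 c.2.2 with h32 | h32
  · obtain ⟨s, hs⟩ := hsq (c.2.2 - c.2.1) (by linarith)
    exact ⟨s, 0, 0, 1, by rw [qcRe]; linear_combination -hs, by simp [qcIm], by simp⟩
  have h1 : c.1 ≤ 1 / 2 := by
    by_contra! h1
    exact h ⟨h1, h32, by linarith⟩
  obtain ⟨s, hs⟩ := hsq ((2 * c.1 - 1) / (c.2.1 + c.2.2))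
    (div_nonneg_of_nonpos (by linarith) h23.le)
  rw [div_eq_iff h23.ne] at hs
  exact ⟨0, 1, s, 0, by rw [qcRe]; linear_combination hs, by simp [qcIm], by simp⟩

lemma qcRe_qcIm_anisotropic_iff (hsq : ∀ x : k, 0 ≤ x → IsSquare x) (c : k × k × k) :
    (∀ a b u v : k, qcRe c a b u v = 0 → qcIm c a b u v = 0 → a = 0 ∧ b = 0 ∧ u = 0 ∧ v = 0)
      ↔ 1 / 2 < c.1 ∧ c.2.2 < c.2.1 ∧ c.2.1 < -c.2.2 := by
  refine ⟨fun h => ?_, fun ⟨h1, h2, h3⟩ a b u v hRe _ => eq_zero_of_qcRe_eq_zero h1 h2 h3 hRe⟩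
  by_contra hc
  obtain ⟨a, b, u, v, hRe, hIm, hne⟩ := exists_qcRe_eq_zero_qcIm_eq_zero hsq hc
  exact hne (h a b u v hRe hIm)

variable {ℓ : Type} [Field ℓ] [Algebra k ℓ] {i : ℓ} {σ : ℓ ≃ₐ[k] ℓ}

lemma isAdmissibleTriple_iff (hquad : finrank k ℓ = 2) (hi : i ^ 2 = -1) (hσi : σ i = -i)
    (c : k × k × k) : IsAdmissibleTriple σ c ↔
      ∀ a b u v : k, qcRe c a b u v = 0 → qcIm c a b u v = 0 → a = 0 ∧ b = 0 ∧ u = 0 ∧ v = 0 := by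
  have hi' := notMem_range_algebraMap_of_sq_eq_neg_one (k := k) hi
  constructor
  · intro h a b u v hRe hIm
    have hq := qc_algebraMap_add_algebraMap_mul hi hσi c a b u v
    rw [hRe, hIm, map_zero, zero_mul, add_zero] at hq
    obtain ⟨hx, hy⟩ := h _ _ hq
    obtain ⟨ha, hb⟩ := eq_zero_of_algebraMap_add_algebraMap_mul_eq_zero hi' hx
    obtain ⟨hu, hv⟩ := eq_zero_of_algebraMap_add_algebraMap_mul_eq_zero hi' hy
    exact ⟨ha, hb, hu, hv⟩
  · intro h x y hq
    obtain ⟨a, b, rfl⟩ := exists_algebraMap_add_algebraMap_mul_eq hquad hi' x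
    obtain ⟨u, v, rfl⟩ := exists_algebraMap_add_algebraMap_mul_eq hquad hi' y
    rw [qc_algebraMap_add_algebraMap_mul hi hσi] at hq
    obtain ⟨hRe, hIm⟩ := eq_zero_of_algebraMap_add_algebraMap_mul_eq_zero hi' hq
    obtain ⟨rfl, rfl, rfl, rfl⟩ := h a b u v hRe hIm
    simp

lemma mul_apply_ne_neg_one (hquad : finrank k ℓ = 2) (hi : i ^ 2 = -1) (hσi : σ i = -i)
    (x : ℓ) : x * σ x ≠ -1 := by
  obtain ⟨a, b, rfl⟩ :=
    exists_algebraMap_add_algebraMap_mul_eq hquad (notMem_range_algebraMap_of_sq_eq_neg_one hi) x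
  rw [mul_apply_algebraMap_add_algebraMap_mul hi hσi, ← map_one (algebraMap k ℓ), ← map_neg,
    (algebraMap k ℓ).injective.ne_iff]
  nlinarith [sq_nonneg a, sq_nonneg b]

end Admissible

/-- Let `k` be a square-ordered field (an ordered field in which every
non-negative element is a square), and let `ℓ = k(√−1)` (a quadratic extension of `k`
containing a square root `i` of `−1`) with nontrivial `k`-automorphism `σ`. Then:
(i) `k*/(k*)²` has order 2, and every quadratic field extension of `k` is isomorphic to `ℓ`;
(ii) the norm map `ℓ* → k*` is not surjective, and `−1` is not a norm `x·σ(x)`;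
(iii) a triple `c = (c₁, c₂, c₃) ∈ k³` is `ℓ`-admissible iff `c₁ > 1/2` and `c₃ < c₂ < −c₃`. -/
theorem square_ordered_classification [Field k] [LinearOrder k] [IsStrictOrderedRing k]
    (hsq : ∀ x : k, 0 ≤ x → IsSquare x)
    (ℓ : Type) [Field ℓ] [Algebra k ℓ] (hquad : finrank k ℓ = 2)
    (i : ℓ) (hi : i ^ 2 = -1)
    (σ : ℓ ≃ₐ[k] ℓ) (hσ : ∃ x : ℓ, σ x ≠ x) :
    -- (i)
    (((powMonoidHom 2 : kˣ →* kˣ).range).index = 2 ∧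
     ∀ (L : Type) [Field L] [Algebra k L], finrank k L = 2 → Nonempty (L ≃ₐ[k] ℓ)) ∧
    -- (ii)
    ((¬ ∀ t : k, t ≠ 0 → ∃ x : ℓ, x * σ x = algebraMap k ℓ t) ∧
     ∀ x : ℓ, x * σ x ≠ -1) ∧
    -- (iii)
    (∀ c : k × k × k, IsAdmissibleTriple σ c ↔
      (1 / 2 < c.1 ∧ c.2.2 < c.2.1 ∧ c.2.1 < -c.2.2)) := by
  have hσi : σ i = -i := σ.apply_eq_neg_of_sq_eq_algebraMap hσ hquad
    (notMem_range_algebraMap_of_sq_eq_neg_one hi) (w := -1) (by rw [hi, map_neg, map_one])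
  have hnorm := mul_apply_ne_neg_one hquad hi hσi
  refine ⟨⟨index_range_powMonoidHom_two hsq, fun L _ _ hL => ?_⟩, ⟨fun hsurj => ?_, hnorm⟩,
    fun c => (isAdmissibleTriple_iff hquad hi hσi c).trans (qcRe_qcIm_anisotropic_iff hsq c)⟩
  · obtain ⟨γ, hγ⟩ := exists_sq_eq_neg_one_of_finrank_eq_two hsq hL
    obtain ⟨e⟩ := nonempty_adjoinRoot_algEquiv sq_ne_neg_one hL hγ
    obtain ⟨e'⟩ := nonempty_adjoinRoot_algEquiv sq_ne_neg_one hquad hi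
    exact ⟨e.symm.trans e'⟩
  · obtain ⟨x, hx⟩ := hsurj (-1) (neg_ne_zero.2 one_ne_zero)
    exact hnorm x (by rwa [map_neg, map_one] at hx)
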